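/- arXiv:math/9809141 — 2 statements merged into one kernel-verified Lean document; each statement's English description precedes it below -/
import Mathlib

section
/- If s ∉ ℤ and r - s ∉ ℤ, then the sl₂-module E_{r,s} is irreducible: every nonzero subspace of E_{r,s} invariant under the operators e, f, h equals all of E_{r,s}. -/
/-! `h` acts diagonally on the basis `E_i` with pairwise distinct eigenvalues `r - 2s - 2i`, so an
`h`-invariant subspace containing `v` contains every component `v i • E_i`: subtracting a
multiple of `v` from `h v` kills one component at a time. Hence a nonzero invariant subspace
contains some `E_i`. The hypotheses on `s` and `r - s` make the coefficients `-(s + i)` and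
`s + i - r` of `e` and `f` nonzero, so from `E_i` one reaches every `E_j` by applying `e` and `f`. -/

open Finsupp

noncomputable def eOp (s : ℂ) : (ℤ →₀ ℂ) →ₗ[ℂ] (ℤ →₀ ℂ) :=
  Finsupp.lsum ℂ (fun i => (-(s + (i : ℂ))) • Finsupp.lsingle (i - 1))

noncomputable def fOp (r s : ℂ) : (ℤ →₀ ℂ) →ₗ[ℂ] (ℤ →₀ ℂ) :=
  Finsupp.lsum ℂ (fun i => ((s + (i : ℂ) - r)) • Finsupp.lsingle (i + 1))

noncomputable def hOp (r s : ℂ) : (ℤ →₀ ℂ) →ₗ[ℂ] (ℤ →₀ ℂ) :=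
  Finsupp.lsum ℂ (fun i => ((-2*s - 2*(i : ℂ) + r)) • Finsupp.lsingle i)

noncomputable def Evec (i : ℤ) : ℤ →₀ ℂ := Finsupp.single i 1

theorem Submodule.single_mem_of_diagonal_invariant {ι K : Type*} [Field K] {w : ι → K}
    (hw : Function.Injective w) {T : (ι →₀ K) →ₗ[K] ι →₀ K} (hT : ∀ v i, T v i = w i * v i)
    {p : Submodule K (ι →₀ K)} (hp : ∀ v ∈ p, T v ∈ p) {v : ι →₀ K} (hv : v ∈ p) (i : ι) :
    single i (v i) ∈ p := by
  classical
  induction hn : v.support.card using Nat.strong_induction_on generalizing v with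
  | _ n ih =>
    by_cases hsupp : v.support ⊆ {i}
    · rwa [← support_subset_singleton.mp hsupp]
    obtain ⟨j, hj, hji⟩ : ∃ j ∈ v.support, j ≠ i := by
      simpa only [Finset.not_subset, Finset.mem_singleton] using hsupp
    set u := T v - w j • v
    have hu : ∀ k, u k = (w k - w j) * v k := fun k => by
      simp only [u, Finsupp.sub_apply, Finsupp.smul_apply, hT, smul_eq_mul]; ring
    have hu_supp : u.support ⊆ v.support.erase j := fun k hk => by
      rw [mem_support_iff, hu] at hk
      refine Finset.mem_erase.2 ⟨fun hkj => ?_, mem_support_iff.2 (right_ne_zero_of_mul hk)⟩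
      simp [hkj] at hk
    have hcard : u.support.card < n :=
      hn ▸ (Finset.card_le_card hu_supp).trans_lt (Finset.card_erase_lt_of_mem hj)
    have hwij : w i - w j ≠ 0 := sub_ne_zero.2 (hw.ne hji.symm)
    have hmem := ih _ hcard (p.sub_mem (hp v hv) (p.smul_mem _ hv)) rfl
    rwa [hu, ← smul_eq_mul, ← smul_single, p.smul_mem_iff hwij] at hmem

theorem hOp_apply (r s : ℂ) (v : ℤ →₀ ℂ) (k : ℤ) :
    hOp r s v k = (-2 * s - 2 * (k : ℂ) + r) * v k := by
  induction v using Finsupp.induction_linear with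
  | zero => simp
  | add v w hv hw => simp [hv, hw, mul_add]
  | single i c =>
    rw [hOp, lsum_single, LinearMap.smul_apply, lsingle_apply, Finsupp.smul_apply, smul_eq_mul]
    rcases eq_or_ne i k with rfl | hik
    · rfl
    · simp [single_eq_of_ne' hik]

theorem eOp_Evec (s : ℂ) (i : ℤ) : eOp s (Evec i) = (-(s + (i : ℂ))) • Evec (i - 1) := by
  rw [eOp, Evec, lsum_single, LinearMap.smul_apply, lsingle_apply]
  rfl

theorem fOp_Evec (r s : ℂ) (i : ℤ) : fOp r s (Evec i) = (s + (i : ℂ) - r) • Evec (i + 1) := by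
  rw [fOp, Evec, lsum_single, LinearMap.smul_apply, lsingle_apply]
  rfl

theorem exists_Evec_mem_of_hOp_invariant (r s : ℂ) {p : Submodule ℂ (ℤ →₀ ℂ)}
    (hp : ∀ v ∈ p, hOp r s v ∈ p) (hne : p ≠ ⊥) : ∃ i, Evec i ∈ p := by
  obtain ⟨v, hv, hv0⟩ := Submodule.exists_mem_ne_zero_of_ne_bot hne
  obtain ⟨i, hi⟩ := Finsupp.ne_iff.mp hv0
  have hw : Function.Injective fun k : ℤ => -2 * s - 2 * (k : ℂ) + r := fun k l hkl => by
    exact_mod_cast (by linear_combination -hkl / 2 : (k : ℂ) = l)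
  refine ⟨i, (p.smul_mem_iff hi).1 ?_⟩
  rw [Evec, smul_single_one]
  exact Submodule.single_mem_of_diagonal_invariant hw (hOp_apply r s) hp hv i

theorem Evec_sub_one_mem {s : ℂ} (hs : ∀ z : ℤ, s ≠ (z : ℂ)) {p : Submodule ℂ (ℤ →₀ ℂ)}
    (hp : ∀ v ∈ p, eOp s v ∈ p) {i : ℤ} (hi : Evec i ∈ p) : Evec (i - 1) ∈ p := by
  have hc : -(s + (i : ℂ)) ≠ 0 := fun h => hs (-i) (by push_cast; linear_combination -h)
  simpa only [eOp_Evec, p.smul_mem_iff hc] using hp _ hi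

theorem Evec_add_one_mem {r s : ℂ} (hrs : ∀ z : ℤ, r - s ≠ (z : ℂ)) {p : Submodule ℂ (ℤ →₀ ℂ)}
    (hp : ∀ v ∈ p, fOp r s v ∈ p) {i : ℤ} (hi : Evec i ∈ p) : Evec (i + 1) ∈ p := by
  have hc : s + (i : ℂ) - r ≠ 0 := fun h => hrs i (by linear_combination -h)
  simpa only [fOp_Evec, p.smul_mem_iff hc] using hp _ hi

theorem eq_top_of_forall_Evec_mem {p : Submodule ℂ (ℤ →₀ ℂ)} (hp : ∀ i, Evec i ∈ p) : p = ⊤ :=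
  eq_top_iff.2 <| Finsupp.basisSingleOne.span_eq.ge.trans <|
    Submodule.span_le.2 <| Set.range_subset_iff.2 fun i => by simpa [Evec] using hp i

/-- If `s ∉ ℤ` and `r - s ∉ ℤ`, then the `sl₂`-module `E_{r,s}` is irreducible:
every nonzero subspace invariant under `e`, `f`, `h` is the whole space. -/
theorem E_irreducible (r s : ℂ) (hs : ∀ z : ℤ, s ≠ (z : ℂ))
    (hrs : ∀ z : ℤ, r - s ≠ (z : ℂ)) :
    ∀ p : Submodule ℂ (ℤ →₀ ℂ),
      (∀ v ∈ p, eOp s v ∈ p ∧ fOp r s v ∈ p ∧ hOp r s v ∈ p) →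
      p ≠ ⊥ → p = ⊤ := by
  intro p hinv hne
  obtain ⟨i, hi⟩ := exists_Evec_mem_of_hOp_invariant r s (fun v hv => (hinv v hv).2.2) hne
  refine eq_top_of_forall_Evec_mem fun j => Int.inductionOn' j i hi ?_ ?_
  · exact fun k _ hk => Evec_add_one_mem hrs (fun v hv => (hinv v hv).2.1) hk
  · exact fun k _ hk => Evec_sub_one_mem hs (fun v hv => (hinv v hv).1) hk
end

section
/- For m ∈ ℕ, the set W^{c_m} = {((jk - 1/4)/(m+2), (j-k)/(m+2)) : j, k ∈ {1/2, 3/2, ...}, j + k ≤ m+1} has exactly (m+1)(m+2)/2 elements. -/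
/-- For `m ∈ ℕ`, `m ≥ 1`, the set
`W^{c_m} = {((jk-1/4)/(m+2), (j-k)/(m+2)) : j, k ∈ {1/2, 3/2, ...}, j + k ≤ m+1}`
has exactly `(m+1)(m+2)/2` elements. -/
theorem W_card (m : ℕ) (hm : 1 ≤ m) :
    ({p : ℚ × ℚ | ∃ j k : ℚ, (∃ a : ℕ, j = (a : ℚ) + 1/2) ∧ (∃ b : ℕ, k = (b : ℚ) + 1/2) ∧
        j + k ≤ (m : ℚ) + 1 ∧
        p = ((j * k - 1/4) / ((m : ℚ) + 2), (j - k) / ((m : ℚ) + 2))} : Set (ℚ × ℚ)).ncard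
      = (m + 1) * (m + 2) / 2 := by
  set f : ℕ × ℕ → ℚ × ℚ := fun ab =>
    ((((ab.1 : ℚ) + 1/2) * ((ab.2 : ℚ) + 1/2) - 1/4) / ((m : ℚ) + 2),
      (((ab.1 : ℚ)) - (ab.2 : ℚ)) / ((m : ℚ) + 2)) with hf
  have hset : ({p : ℚ × ℚ | ∃ j k : ℚ, (∃ a : ℕ, j = (a : ℚ) + 1/2) ∧ (∃ b : ℕ, k = (b : ℚ) + 1/2) ∧
        j + k ≤ (m : ℚ) + 1 ∧
        p = ((j * k - 1/4) / ((m : ℚ) + 2), (j - k) / ((m : ℚ) + 2))} : Set (ℚ × ℚ))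
      = f '' {ab : ℕ × ℕ | ab.1 + ab.2 ≤ m} := by
    ext p
    constructor
    · rintro ⟨j, k, ⟨a, rfl⟩, ⟨b, rfl⟩, hle, rfl⟩
      refine ⟨(a, b), ?_, ?_⟩
      · have : (a : ℚ) + (b : ℚ) ≤ m := by linarith
        exact_mod_cast this
      · simp [hf]
    · rintro ⟨⟨a, b⟩, hab, rfl⟩
      refine ⟨(a : ℚ) + 1/2, (b : ℚ) + 1/2, ⟨a, rfl⟩, ⟨b, rfl⟩, ?_, ?_⟩
      · have : (a : ℚ) + (b : ℚ) ≤ m := by exact_mod_cast hab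
        linarith
      · simp [hf]
  rw [hset]
  have hinj : Set.InjOn f {ab : ℕ × ℕ | ab.1 + ab.2 ≤ m} := by
    rintro ⟨a1, b1⟩ _ ⟨a2, b2⟩ _ h
    have hm2 : ((m : ℚ) + 2) ≠ 0 := by positivity
    have h1 : (((a1 : ℚ) + 1/2) * ((b1 : ℚ) + 1/2) - 1/4)
        = (((a2 : ℚ) + 1/2) * ((b2 : ℚ) + 1/2) - 1/4) := by
      have := congrArg Prod.fst h
      simp only [hf] at this
      rw [div_left_inj' hm2] at this
      linarith [this]
    have h2 : ((a1 : ℚ)) - (b1 : ℚ) = (a2 : ℚ) - (b2 : ℚ) := by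
      have := congrArg Prod.snd h
      simp only [hf] at this
      rw [div_left_inj' hm2] at this
      linarith [this]
    have ha1 : (0:ℚ) ≤ a1 := Nat.cast_nonneg _
    have hb1 : (0:ℚ) ≤ b1 := Nat.cast_nonneg _
    have ha2 : (0:ℚ) ≤ a2 := Nat.cast_nonneg _
    have hb2 : (0:ℚ) ≤ b2 := Nat.cast_nonneg _
    have hs : (a1 : ℚ) + b1 = a2 + b2 := by
      nlinarith [sq_nonneg ((a1:ℚ) + b1 - a2 - b2), sq_nonneg ((a1:ℚ) + b1 + a2 + b2 + 2)]
    have hA : (a1 : ℚ) = a2 := by linarith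
    have hB : (b1 : ℚ) = b2 := by linarith
    have : a1 = a2 := by exact_mod_cast hA
    have : b1 = b2 := by exact_mod_cast hB
    simp_all
  rw [Set.ncard_image_of_injOn hinj]
  have hT : {ab : ℕ × ℕ | ab.1 + ab.2 ≤ m}
      = ↑((Finset.range (m+1)).biUnion (fun n => Finset.HasAntidiagonal.antidiagonal n)) := by
    ext ⟨a, b⟩
    simp [Finset.HasAntidiagonal.mem_antidiagonal]
  rw [hT, Set.ncard_coe_finset]
  rw [Finset.card_biUnion]
  · have key : ∀ n : ℕ, (∑ k ∈ Finset.range n, (k+1)) * 2 = n * (n+1) := by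
      intro n
      induction n with
      | zero => simp
      | succ n ih => rw [Finset.sum_range_succ, add_mul, ih]; ring
    simp only [Finset.Nat.card_antidiagonal]
    have h := key (m+1)
    generalize hS : (∑ k ∈ Finset.range (m+1), (k+1)) = S at h ⊢
    have h2 : (m+1) * (m+1+1) = (m+1) * (m+2) := by ring
    rw [h2] at h
    generalize (m+1) * (m+2) = t at h ⊢
    omega
  · intro x _ y _ hxy
    simp [Finset.disjoint_left, Finset.HasAntidiagonal.mem_antidiagonal]
    omega
end
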